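/- arXiv:2306.16863 — 3 statements merged into one kernel-verified Lean document; each statement's English description precedes it below -/
import Mathlib

section
/- Let H be a real separable Hilbert space with Hilbert basis (ν_k)_{k∈ℕ}, let d, N ∈ ℕ with N ≥ 1, let v_1, …, v_N ∈ H, let 𝒽 : H → ℝ^d be any function, and let S : ℝ^d → ℝ^d be a linear map. With E^N[v] := (1/N)∑_{i=1}^N v_i, E^N_𝒽[v] := (1/N)∑_{i=1}^N 𝒽(v_i), and C^N_𝒽[v] : ℝ^d → H the continuous linear map y ↦ (1/N)∑_{i=1}^N ⟨𝒽(v_i) − E^N_𝒽[v], y⟩ (v_i − E^N[v]), one has (1/N)∑_{i=1}^N ⟨v_i − E^N[v], C^N_𝒽[v] (S (𝒽(v_i) − E^N_𝒽[v]))⟩ = ∑'_{k} ⟨ν_k, C^N_𝒽[v] (S ((C^N_𝒽[v])* ν_k))⟩, where (C^N_𝒽[v])* denotes the Hilbert-space adjoint of C^N_𝒽[v]. -/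
open RealInnerProductSpace

/-- The empirical mean `E^N[v] = (1/N) ∑ᵢ vᵢ` of an ensemble. -/
noncomputable def empMean {H : Type*} [NormedAddCommGroup H] [InnerProductSpace ℝ H]
    {N : ℕ} (v : Fin N → H) : H :=
  (N : ℝ)⁻¹ • ∑ i, v i

/-- The empirical observed mean `E^N_𝒽[v] = (1/N) ∑ᵢ 𝒽(vᵢ)`. -/
noncomputable def empObsMean {H : Type*} [NormedAddCommGroup H] [InnerProductSpace ℝ H]
    {d N : ℕ} (v : Fin N → H) (g : H → EuclideanSpace ℝ (Fin d)) :
    EuclideanSpace ℝ (Fin d) :=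
  (N : ℝ)⁻¹ • ∑ i, g (v i)

/-- The empirical covariance `C^N_𝒽[v] : ℝ^d → H`,
`y ↦ (1/N) ∑ᵢ ⟨𝒽(vᵢ) − E^N_𝒽[v], y⟩ (vᵢ − E^N[v])`. -/
noncomputable def empCov {H : Type*} [NormedAddCommGroup H] [InnerProductSpace ℝ H]
    {d N : ℕ} (v : Fin N → H) (g : H → EuclideanSpace ℝ (Fin d)) :
    EuclideanSpace ℝ (Fin d) →L[ℝ] H :=
  (N : ℝ)⁻¹ • ∑ i : Fin N,
    (innerSL ℝ (g (v i) - empObsMean v g)).smulRight (v i - empMean v)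

/-! The empirical covariance is the rank-one sum `C = N⁻¹ ∑ᵢ |vᵢ - E[v]⟩⟨𝒽(vᵢ) - E_𝒽[v]|`, so
`C S C* = N⁻¹ ∑ᵢ |C S (𝒽(vᵢ) - E_𝒽[v])⟩⟨vᵢ - E[v]|`, and by Parseval the diagonal sum
`∑ₖ ⟪νₖ, |x⟩⟨y| νₖ⟫` of a rank-one operator equals `⟪y, x⟫`. -/

open InnerProductSpace ContinuousLinearMap

namespace HilbertBasis

variable {ι 𝕜 E : Type*} [RCLike 𝕜] [NormedAddCommGroup E] [InnerProductSpace 𝕜 E]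

theorem hasSum_inner_rankOne_apply (ν : HilbertBasis ι 𝕜 E) (x y : E) :
    HasSum (fun k => inner 𝕜 (ν k) (rankOne 𝕜 x y (ν k))) (inner 𝕜 y x) := by
  simpa only [rankOne_apply, inner_smul_right] using ν.hasSum_inner_mul_inner y x

theorem hasSum_inner_sum_rankOne_apply {α : Type*} (ν : HilbertBasis ι 𝕜 E) (s : Finset α)
    (x y : α → E) :
    HasSum (fun k => inner 𝕜 (ν k) ((∑ j ∈ s, rankOne 𝕜 (x j) (y j)) (ν k)))
      (∑ j ∈ s, inner 𝕜 (y j) (x j)) := by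
  simpa only [sum_apply, inner_sum] using
    hasSum_sum fun j _ => ν.hasSum_inner_rankOne_apply (x j) (y j)

end HilbertBasis

section EmpiricalCovariance

variable {H : Type*} [NormedAddCommGroup H] [InnerProductSpace ℝ H] {d N : ℕ}
  (v : Fin N → H) (g : H → EuclideanSpace ℝ (Fin d))

theorem empCov_eq_smul_sum_rankOne :
    empCov v g = (N : ℝ)⁻¹ • ∑ i, rankOne ℝ (v i - empMean v) (g (v i) - empObsMean v g) :=
  rfl

theorem adjoint_empCov [CompleteSpace H] :
    adjoint (empCov v g)
      = (N : ℝ)⁻¹ • ∑ i, rankOne ℝ (g (v i) - empObsMean v g) (v i - empMean v) := by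
  simp only [empCov_eq_smul_sum_rankOne, map_smul, map_sum, adjoint_rankOne]

theorem empCov_comp_comp_adjoint [CompleteSpace H]
    (S : EuclideanSpace ℝ (Fin d) →L[ℝ] EuclideanSpace ℝ (Fin d)) :
    empCov v g ∘L S ∘L adjoint (empCov v g)
      = (N : ℝ)⁻¹ • ∑ i, rankOne ℝ (empCov v g (S (g (v i) - empObsMean v g)))
          (v i - empMean v) := by
  simp only [adjoint_empCov, comp_smul, comp_finsetSum, comp_rankOne]

end EmpiricalCovariance

theorem empCov_parseval_trace_general
    {H : Type*} [NormedAddCommGroup H] [InnerProductSpace ℝ H] [CompleteSpace H]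
    (ν : HilbertBasis ℕ ℝ H) {d N : ℕ}
    (v : Fin N → H) (g : H → EuclideanSpace ℝ (Fin d))
    (S : EuclideanSpace ℝ (Fin d) →L[ℝ] EuclideanSpace ℝ (Fin d)) :
    (N : ℝ)⁻¹ * ∑ i : Fin N,
        (⟪v i - empMean v, empCov v g (S (g (v i) - empObsMean v g))⟫ : ℝ)
      = ∑' k : ℕ,
        (⟪ν k, empCov v g (S ((ContinuousLinearMap.adjoint (empCov v g)) (ν k)))⟫ : ℝ) := by
  have htrace := (ν.hasSum_inner_sum_rankOne_apply Finset.univ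
    (fun i => empCov v g (S (g (v i) - empObsMean v g))) (fun i => v i - empMean v)).mul_left
      (N : ℝ)⁻¹
  simp only [← inner_smul_right, ← smul_apply, ← empCov_comp_comp_adjoint] at htrace
  exact htrace.tsum_eq.symm

/-- Parseval identity for the EnKBF contraction term:
`(1/N) ∑ᵢ ⟨vᵢ − E^N[v], C^N_𝒽[v] (S (𝒽(vᵢ) − E^N_𝒽[v]))⟩
  = ∑'_k ⟨ν_k, C^N_𝒽[v] (S ((C^N_𝒽[v])* ν_k))⟩`. -/
theorem empCov_parseval_trace
    {H : Type*} [NormedAddCommGroup H] [InnerProductSpace ℝ H] [CompleteSpace H]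
    (ν : HilbertBasis ℕ ℝ H) {d N : ℕ} (hN : 1 ≤ N)
    (v : Fin N → H) (g : H → EuclideanSpace ℝ (Fin d))
    (S : EuclideanSpace ℝ (Fin d) →L[ℝ] EuclideanSpace ℝ (Fin d)) :
    (N : ℝ)⁻¹ * ∑ i : Fin N,
        (⟪v i - empMean v, empCov v g (S (g (v i) - empObsMean v g))⟫ : ℝ)
      = ∑' k : ℕ,
        (⟪ν k, empCov v g (S ((ContinuousLinearMap.adjoint (empCov v g)) (ν k)))⟫ : ℝ) :=
  empCov_parseval_trace_general ν v g S
end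

section
/- Let H be a real Hilbert space, d ∈ ℕ, and let X¹, X² : Ω → H and h¹, h² : Ω → ℝ^d be strongly measurable random variables on a probability space, all square-integrable. Define Cov[X,h] : ℝ^d → H by y ↦ E[⟨h − E[h], y⟩ (X − E[X])]. Then ‖Cov[X¹,h¹] − Cov[X²,h²]‖ ≤ √(E[‖X¹ − X²‖²]) · √(E[‖h¹ − E[h¹]‖²]) + √(E[‖X² − E[X²]‖²]) · √(E[‖h¹ − h²‖²]), where ‖·‖ denotes the operator norm. -/
open MeasureTheory RealInnerProductSpace

/-!
Centring both pairs, `Cov[X¹,h¹] y - Cov[X²,h²] y` splits by bilinearity as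
`E[⟨h̄¹, y⟩ (X̄¹ - X̄²)] + E[⟨h̄¹ - h̄², y⟩ X̄²]`, and Cauchy–Schwarz in `L²` bounds each term.
Finally `X̄¹ - X̄²` is the centring of `X¹ - X²`, and centring does not increase the second
moment; likewise for `h̄¹ - h̄²`.
-/

section

variable {Ω : Type*} [MeasurableSpace Ω] {μ : Measure Ω}

theorem integral_norm_mul_norm_le_sqrt {E F : Type*} [NormedAddCommGroup E]
    [NormedAddCommGroup F] {f : Ω → E} {g : Ω → F} (hf : MemLp f 2 μ) (hg : MemLp g 2 μ) :
    ∫ ω, ‖f ω‖ * ‖g ω‖ ∂μ ≤ √(∫ ω, ‖f ω‖ ^ 2 ∂μ) * √(∫ ω, ‖g ω‖ ^ 2 ∂μ) := by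
  have := integral_mul_norm_le_Lp_mul_Lq (f := fun ω => ‖f ω‖) (g := fun ω => ‖g ω‖)
    Real.HolderConjugate.two_two (by simpa using hf.norm) (by simpa using hg.norm)
  simpa [Real.rpow_two, Real.sqrt_eq_rpow] using this

variable {E F : Type*} [NormedAddCommGroup E] [InnerProductSpace ℝ E]
  [NormedAddCommGroup F] [NormedSpace ℝ F]

theorem MeasureTheory.MemLp.integrable_inner_smul {u : Ω → E} {V : Ω → F}
    (hu : MemLp u 2 μ) (hV : MemLp V 2 μ) (y : E) :
    Integrable (fun ω => ⟪u ω, y⟫ • V ω) μ :=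
  memLp_one_iff_integrable.mp (hV.smul (hu.inner_const y))

theorem norm_integral_inner_smul_le {u : Ω → E} {V : Ω → F}
    (hu : MemLp u 2 μ) (hV : MemLp V 2 μ) (y : E) :
    ‖∫ ω, ⟪u ω, y⟫ • V ω ∂μ‖
      ≤ √(∫ ω, ‖V ω‖ ^ 2 ∂μ) * √(∫ ω, ‖u ω‖ ^ 2 ∂μ) * ‖y‖ := by
  have hpointwise : ∀ ω, ‖⟪u ω, y⟫ • V ω‖ ≤ ‖V ω‖ * ‖u ω‖ * ‖y‖ := fun ω => by
    rw [norm_smul, Real.norm_eq_abs]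
    nlinarith [abs_real_inner_le_norm (u ω) y, norm_nonneg (V ω)]
  calc ‖∫ ω, ⟪u ω, y⟫ • V ω ∂μ‖
      ≤ ∫ ω, ‖⟪u ω, y⟫ • V ω‖ ∂μ := norm_integral_le_integral_norm _
    _ ≤ ∫ ω, ‖V ω‖ * ‖u ω‖ * ‖y‖ ∂μ :=
        integral_mono_of_nonneg (.of_forall fun _ => norm_nonneg _)
          ((hV.norm.integrable_mul hu.norm).mul_const _) (.of_forall hpointwise)
    _ = (∫ ω, ‖V ω‖ * ‖u ω‖ ∂μ) * ‖y‖ := integral_mul_const _ _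
    _ ≤ _ := by gcongr; exact integral_norm_mul_norm_le_sqrt hV hu

theorem norm_integral_inner_smul_sub_le {u₁ u₂ : Ω → E} {V₁ V₂ : Ω → F}
    (hu₁ : MemLp u₁ 2 μ) (hu₂ : MemLp u₂ 2 μ) (hV₁ : MemLp V₁ 2 μ) (hV₂ : MemLp V₂ 2 μ)
    (y : E) :
    ‖∫ ω, ⟪u₁ ω, y⟫ • V₁ ω ∂μ - ∫ ω, ⟪u₂ ω, y⟫ • V₂ ω ∂μ‖
      ≤ (√(∫ ω, ‖V₁ ω - V₂ ω‖ ^ 2 ∂μ) * √(∫ ω, ‖u₁ ω‖ ^ 2 ∂μ)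
          + √(∫ ω, ‖V₂ ω‖ ^ 2 ∂μ) * √(∫ ω, ‖u₁ ω - u₂ ω‖ ^ 2 ∂μ)) * ‖y‖ := by
  have hsplit : ∫ ω, ⟪u₁ ω, y⟫ • V₁ ω ∂μ - ∫ ω, ⟪u₂ ω, y⟫ • V₂ ω ∂μ
      = ∫ ω, ⟪u₁ ω, y⟫ • (V₁ - V₂) ω ∂μ + ∫ ω, ⟪(u₁ - u₂) ω, y⟫ • V₂ ω ∂μ := by
    rw [← integral_sub (hu₁.integrable_inner_smul hV₁ y) (hu₂.integrable_inner_smul hV₂ y),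
      ← integral_add (hu₁.integrable_inner_smul (hV₁.sub hV₂) y)
        ((hu₁.sub hu₂).integrable_inner_smul hV₂ y)]
    congr with ω
    simp only [Pi.sub_apply, inner_sub_left, smul_sub, sub_smul]
    abel
  rw [hsplit, add_mul]
  exact (norm_add_le _ _).trans (add_le_add
    (norm_integral_inner_smul_le hu₁ (hV₁.sub hV₂) y)
    (norm_integral_inner_smul_le (hu₁.sub hu₂) hV₂ y))

variable [IsProbabilityMeasure μ] [CompleteSpace E]

theorem integral_norm_sub_integral_sq {Z : Ω → E} (hZ : MemLp Z 2 μ) :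
    ∫ ω, ‖Z ω - ∫ ω', Z ω' ∂μ‖ ^ 2 ∂μ = ∫ ω, ‖Z ω‖ ^ 2 ∂μ - ‖∫ ω, Z ω ∂μ‖ ^ 2 := by
  set m := ∫ ω, Z ω ∂μ
  have hZ₁ : Integrable Z μ := hZ.integrable one_le_two
  have hZ₂ : Integrable (fun ω => ‖Z ω‖ ^ 2) μ := hZ.integrable_norm_pow two_ne_zero
  have hinner : Integrable (fun ω => 2 * ⟪Z ω, m⟫) μ := (hZ₁.inner_const m).const_mul 2
  have hmean : ∫ ω, ⟪Z ω, m⟫ ∂μ = ‖m‖ ^ 2 := by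
    simp_rw [real_inner_comm m]
    rw [integral_inner hZ₁, real_inner_self_eq_norm_sq]
  simp_rw [norm_sub_sq_real]
  rw [integral_add (f := fun ω => ‖Z ω‖ ^ 2 - 2 * ⟪Z ω, m⟫) (hZ₂.sub hinner)
    (integrable_const _), integral_sub hZ₂ hinner, integral_const_mul, hmean, integral_const]
  simp only [probReal_univ, one_smul]
  ring

theorem integral_norm_sub_integral_sq_le {Z : Ω → E} (hZ : MemLp Z 2 μ) :
    ∫ ω, ‖Z ω - ∫ ω', Z ω' ∂μ‖ ^ 2 ∂μ ≤ ∫ ω, ‖Z ω‖ ^ 2 ∂μ := by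
  rw [integral_norm_sub_integral_sq hZ]
  exact sub_le_self _ (sq_nonneg _)

theorem integral_norm_centered_sub_sq_le {Z₁ Z₂ : Ω → E}
    (hZ₁ : MemLp Z₁ 2 μ) (hZ₂ : MemLp Z₂ 2 μ) :
    ∫ ω, ‖(Z₁ ω - ∫ ω', Z₁ ω' ∂μ) - (Z₂ ω - ∫ ω', Z₂ ω' ∂μ)‖ ^ 2 ∂μ
      ≤ ∫ ω, ‖Z₁ ω - Z₂ ω‖ ^ 2 ∂μ := by
  have hcentered : ∀ ω, (Z₁ ω - ∫ ω', Z₁ ω' ∂μ) - (Z₂ ω - ∫ ω', Z₂ ω' ∂μ)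
      = (Z₁ ω - Z₂ ω) - ∫ ω', (Z₁ ω' - Z₂ ω') ∂μ := fun ω => by
    rw [integral_sub (hZ₁.integrable one_le_two) (hZ₂.integrable one_le_two)]
    abel
  simp_rw [hcentered]
  exact integral_norm_sub_integral_sq_le (hZ₁.sub hZ₂)

end

/-- Lipschitz bound for the difference of two covariance operators
`Cov[X,h] : ℝ^d → H`, `y ↦ E[⟨h − E[h], y⟩ (X − E[X])]`:
`‖Cov[X¹,h¹] − Cov[X²,h²]‖ ≤ √(E[‖X¹ − X²‖²])·√(E[‖h¹ − E h¹‖²])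
  + √(E[‖X² − E X²‖²])·√(E[‖h¹ − h²‖²])`. -/
theorem covOp_difference_bound
    {H : Type*} [NormedAddCommGroup H] [InnerProductSpace ℝ H] [CompleteSpace H]
    {Ω : Type*} [MeasurableSpace Ω] {μ : Measure Ω} [IsProbabilityMeasure μ]
    {d : ℕ} {X₁ X₂ : Ω → H} {h₁ h₂ : Ω → EuclideanSpace ℝ (Fin d)}
    (hX₁m : StronglyMeasurable X₁) (hX₂m : StronglyMeasurable X₂)
    (hh₁m : StronglyMeasurable h₁) (hh₂m : StronglyMeasurable h₂)
    (hX₁2 : Integrable (fun ω => ‖X₁ ω‖ ^ 2) μ)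
    (hX₂2 : Integrable (fun ω => ‖X₂ ω‖ ^ 2) μ)
    (hh₁2 : Integrable (fun ω => ‖h₁ ω‖ ^ 2) μ)
    (hh₂2 : Integrable (fun ω => ‖h₂ ω‖ ^ 2) μ)
    (C₁ C₂ : EuclideanSpace ℝ (Fin d) →L[ℝ] H)
    (hC₁ : ∀ y, C₁ y = ∫ ω,
      (⟪h₁ ω - (∫ ω', h₁ ω' ∂μ), y⟫ : ℝ) • (X₁ ω - (∫ ω', X₁ ω' ∂μ)) ∂μ)
    (hC₂ : ∀ y, C₂ y = ∫ ω,
      (⟪h₂ ω - (∫ ω', h₂ ω' ∂μ), y⟫ : ℝ) • (X₂ ω - (∫ ω', X₂ ω' ∂μ)) ∂μ) :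
    ‖C₁ - C₂‖
      ≤ Real.sqrt (∫ ω, ‖X₁ ω - X₂ ω‖ ^ 2 ∂μ)
          * Real.sqrt (∫ ω, ‖h₁ ω - (∫ ω', h₁ ω' ∂μ)‖ ^ 2 ∂μ)
        + Real.sqrt (∫ ω, ‖X₂ ω - (∫ ω', X₂ ω' ∂μ)‖ ^ 2 ∂μ)
          * Real.sqrt (∫ ω, ‖h₁ ω - h₂ ω‖ ^ 2 ∂μ) := by
  have hX₁ : MemLp X₁ 2 μ := (memLp_two_iff_integrable_sq_norm hX₁m.aestronglyMeasurable).mpr hX₁2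
  have hX₂ : MemLp X₂ 2 μ := (memLp_two_iff_integrable_sq_norm hX₂m.aestronglyMeasurable).mpr hX₂2
  have hh₁ : MemLp h₁ 2 μ := (memLp_two_iff_integrable_sq_norm hh₁m.aestronglyMeasurable).mpr hh₁2
  have hh₂ : MemLp h₂ 2 μ := (memLp_two_iff_integrable_sq_norm hh₂m.aestronglyMeasurable).mpr hh₂2
  refine ContinuousLinearMap.opNorm_le_bound _ (by positivity) fun y => ?_
  rw [sub_apply, hC₁, hC₂]
  refine (norm_integral_inner_smul_sub_le (hh₁.sub (memLp_const _)) (hh₂.sub (memLp_const _))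
    (hX₁.sub (memLp_const _)) (hX₂.sub (memLp_const _)) y).trans ?_
  gcongr (√?_ * _ + _ * √?_) * _
  · exact integral_norm_centered_sub_sq_le hX₁ hX₂
  · exact integral_norm_centered_sub_sq_le hh₁ hh₂
end

section
/- Let H be a real Hilbert space, d, N ∈ ℕ with N ≥ 1, let u_1, …, u_N, ū_1, …, ū_N ∈ H, and let 𝒽 : H → ℝ^d be Lipschitz with constant L. For an ensemble v ∈ H^N set E^N[v] := (1/N)∑_i v_i, E^N_𝒽[v] := (1/N)∑_i 𝒽(v_i), σ^N[v] := (1/N)∑_i ‖v_i − E^N[v]‖², σ^{N,𝒽}[v] := (1/N)∑_i ‖𝒽(v_i) − E^N_𝒽[v]‖², and let C^N_𝒽[v] : ℝ^d → H be the map y ↦ (1/N)∑_i ⟨𝒽(v_i) − E^N_𝒽[v], y⟩ (v_i − E^N[v]). Then ‖C^N_𝒽[u] − C^N_𝒽[ū]‖ ≤ (L·√(σ^N[u]) + √(σ^{N,𝒽}[ū])) · √((1/N)∑_{i=1}^N ‖u_i − ū_i‖²), where ‖·‖ is the operator norm. -/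
open RealInnerProductSpace

/-- The empirical variance `σ^N[v] = (1/N) ∑ᵢ ‖vᵢ − E^N[v]‖²`. -/
noncomputable def empVar {H : Type*} [NormedAddCommGroup H] [InnerProductSpace ℝ H]
    {N : ℕ} (v : Fin N → H) : ℝ :=
  (N : ℝ)⁻¹ * ∑ i, ‖v i - empMean v‖ ^ 2

/-- The empirical observed variance `σ^{N,𝒽}[v] = (1/N) ∑ᵢ ‖𝒽(vᵢ) − E^N_𝒽[v]‖²`. -/
noncomputable def empObsVar {H : Type*} [NormedAddCommGroup H] [InnerProductSpace ℝ H]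
    {d N : ℕ} (v : Fin N → H) (g : H → EuclideanSpace ℝ (Fin d)) : ℝ :=
  (N : ℝ)⁻¹ * ∑ i, ‖g (v i) - empObsMean v g‖ ^ 2

private lemma sum_sub_mean_sq_le {H : Type*} [NormedAddCommGroup H] [InnerProductSpace ℝ H]
    {N : ℕ} (c : Fin N → H) :
    ∑ i, ‖c i - (N : ℝ)⁻¹ • ∑ j, c j‖ ^ 2 ≤ ∑ i, ‖c i‖ ^ 2 := by
  rcases Nat.eq_zero_or_pos N with h | h
  · subst h; simp
  have hN0 : (N : ℝ) ≠ 0 := by positivity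
  set m := (N : ℝ)⁻¹ • ∑ j, c j with hm
  have hsum : ∑ j, c j = (N : ℝ) • m := by rw [hm, smul_inv_smul₀ hN0]
  have expand : ∀ i, ‖c i - m‖ ^ 2 = ‖c i‖ ^ 2 - 2 * ⟪ c i, m ⟫ + ‖m‖ ^ 2 := fun i =>
    norm_sub_sq_real _ _
  calc ∑ i, ‖c i - m‖ ^ 2 = ∑ i, (‖c i‖ ^ 2 - 2 * ⟪ c i, m ⟫ + ‖m‖ ^ 2) := by
        simp_rw [expand]
    _ = ∑ i, ‖c i‖ ^ 2 - 2 * ⟪ ∑ i, c i, m ⟫ + N * ‖m‖ ^ 2 := by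
        rw [Finset.sum_add_distrib, Finset.sum_sub_distrib, ← Finset.mul_sum, sum_inner]
        simp [mul_comm]
    _ = ∑ i, ‖c i‖ ^ 2 - N * ‖m‖ ^ 2 := by
        rw [hsum, real_inner_smul_left, real_inner_self_eq_norm_sq]
        ring
    _ ≤ ∑ i, ‖c i‖ ^ 2 := sub_le_self _ (by positivity)

private lemma sum_mul_le_sqrt {N : ℕ} (f g : Fin N → ℝ) (hf : ∀ i, 0 ≤ f i)
    (hg : ∀ i, 0 ≤ g i) :
    ∑ i, f i * g i ≤ Real.sqrt (∑ i, f i ^ 2) * Real.sqrt (∑ i, g i ^ 2) := by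
  have h := Finset.sum_mul_sq_le_sq_mul_sq Finset.univ f g
  have h0 : 0 ≤ ∑ i, f i * g i := Finset.sum_nonneg fun i _ => mul_nonneg (hf i) (hg i)
  calc ∑ i, f i * g i = Real.sqrt ((∑ i, f i * g i) ^ 2) := (Real.sqrt_sq h0).symm
    _ ≤ Real.sqrt ((∑ i, f i ^ 2) * ∑ i, g i ^ 2) := Real.sqrt_le_sqrt h
    _ = _ := Real.sqrt_mul (by positivity) _

/-- Perturbation bound for the empirical covariance under a Lipschitz
observation function:
`‖C^N_𝒽[u] − C^N_𝒽[ū]‖ ≤ (L √(σ^N[u]) + √(σ^{N,𝒽}[ū])) √((1/N) ∑ᵢ ‖uᵢ − ūᵢ‖²)`. -/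
theorem empCov_perturbation_bound
    {H : Type*} [NormedAddCommGroup H] [InnerProductSpace ℝ H]
    {d N : ℕ} (hN : 1 ≤ N) (u ubar : Fin N → H)
    (g : H → EuclideanSpace ℝ (Fin d)) (L : NNReal) (hg : LipschitzWith L g) :
    ‖empCov u g - empCov ubar g‖
      ≤ ((L : ℝ) * Real.sqrt (empVar u) + Real.sqrt (empObsVar ubar g))
        * Real.sqrt ((N : ℝ)⁻¹ * ∑ i, ‖u i - ubar i‖ ^ 2) := by
  have hN0 : (0 : ℝ) < N := by exact_mod_cast hN
  have hNinv : (0 : ℝ) ≤ (N : ℝ)⁻¹ := by positivity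
  set S : ℝ := ∑ i, ‖u i - ubar i‖ ^ 2 with hS
  have hS0 : 0 ≤ S := by positivity
  set P : ℝ := ∑ i, ‖u i - empMean u‖ ^ 2 with hP
  set B : ℝ := ∑ i, ‖g (ubar i) - empObsMean ubar g‖ ^ 2 with hB
  have hP0 : 0 ≤ P := by positivity
  have hB0 : 0 ≤ B := by positivity
  -- difference of centered observations
  have hab : ∀ i, (g (u i) - empObsMean u g) - (g (ubar i) - empObsMean ubar g)
      = (g (u i) - g (ubar i)) - (N : ℝ)⁻¹ • ∑ j, (g (u j) - g (ubar j)) := by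
    intro i
    simp only [empObsMean, Finset.sum_sub_distrib, smul_sub]
    abel
  have hpq : ∀ i, (u i - empMean u) - (ubar i - empMean ubar)
      = (u i - ubar i) - (N : ℝ)⁻¹ • ∑ j, (u j - ubar j) := by
    intro i
    simp only [empMean, Finset.sum_sub_distrib, smul_sub]
    abel
  have hA : ∑ i, ‖(g (u i) - empObsMean u g) - (g (ubar i) - empObsMean ubar g)‖ ^ 2
      ≤ (L : ℝ) ^ 2 * S := by
    calc ∑ i, ‖(g (u i) - empObsMean u g) - (g (ubar i) - empObsMean ubar g)‖ ^ 2
        = ∑ i, ‖(g (u i) - g (ubar i)) - (N : ℝ)⁻¹ • ∑ j, (g (u j) - g (ubar j))‖ ^ 2 := by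
          simp_rw [hab]
      _ ≤ ∑ i, ‖g (u i) - g (ubar i)‖ ^ 2 := sum_sub_mean_sq_le _
      _ ≤ ∑ i, (L : ℝ) ^ 2 * ‖u i - ubar i‖ ^ 2 := by
          refine Finset.sum_le_sum fun i _ => ?_
          have h1 := hg.dist_le_mul (u i) (ubar i)
          rw [dist_eq_norm, dist_eq_norm] at h1
          nlinarith [norm_nonneg (g (u i) - g (ubar i)), norm_nonneg (u i - ubar i),
            L.coe_nonneg]
      _ = (L : ℝ) ^ 2 * S := by rw [hS, Finset.mul_sum]
  have hQ : ∑ i, ‖(u i - empMean u) - (ubar i - empMean ubar)‖ ^ 2 ≤ S := by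
    calc ∑ i, ‖(u i - empMean u) - (ubar i - empMean ubar)‖ ^ 2
        = ∑ i, ‖(u i - ubar i) - (N : ℝ)⁻¹ • ∑ j, (u j - ubar j)‖ ^ 2 := by simp_rw [hpq]
      _ ≤ S := sum_sub_mean_sq_le _
  -- Cauchy–Schwarz bounds for the two cross sums
  have h1 : ∑ i, ‖(g (u i) - empObsMean u g) - (g (ubar i) - empObsMean ubar g)‖
        * ‖u i - empMean u‖
      ≤ Real.sqrt ((L : ℝ) ^ 2 * S) * Real.sqrt P := by
    calc ∑ i, ‖(g (u i) - empObsMean u g) - (g (ubar i) - empObsMean ubar g)‖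
          * ‖u i - empMean u‖
        ≤ Real.sqrt (∑ i, ‖(g (u i) - empObsMean u g) - (g (ubar i) - empObsMean ubar g)‖ ^ 2)
            * Real.sqrt P :=
          sum_mul_le_sqrt _ _ (fun _ => norm_nonneg _) (fun _ => norm_nonneg _)
      _ ≤ Real.sqrt ((L : ℝ) ^ 2 * S) * Real.sqrt P :=
          mul_le_mul_of_nonneg_right (Real.sqrt_le_sqrt hA) (Real.sqrt_nonneg _)
  have h2 : ∑ i, ‖g (ubar i) - empObsMean ubar g‖
        * ‖(u i - empMean u) - (ubar i - empMean ubar)‖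
      ≤ Real.sqrt B * Real.sqrt S := by
    calc ∑ i, ‖g (ubar i) - empObsMean ubar g‖ * ‖(u i - empMean u) - (ubar i - empMean ubar)‖
        ≤ Real.sqrt B * Real.sqrt (∑ i, ‖(u i - empMean u) - (ubar i - empMean ubar)‖ ^ 2) :=
          sum_mul_le_sqrt _ _ (fun _ => norm_nonneg _) (fun _ => norm_nonneg _)
      _ ≤ Real.sqrt B * Real.sqrt S :=
          mul_le_mul_of_nonneg_left (Real.sqrt_le_sqrt hQ) (Real.sqrt_nonneg _)
  refine ContinuousLinearMap.opNorm_le_bound _ (by positivity) fun y => ?_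
  have happ : (empCov u g - empCov ubar g) y
      = (N : ℝ)⁻¹ • ∑ i, (⟪g (u i) - empObsMean u g, y⟫ • (u i - empMean u)
          - ⟪g (ubar i) - empObsMean ubar g, y⟫ • (ubar i - empMean ubar)) := by
    simp only [empCov, ContinuousLinearMap.sub_apply, ContinuousLinearMap.smul_apply,
      ContinuousLinearMap.sum_apply, ContinuousLinearMap.smulRight_apply, innerSL_apply_apply]
    rw [Finset.sum_sub_distrib, smul_sub]
  have hpt : ∀ i, ‖⟪g (u i) - empObsMean u g, y⟫ • (u i - empMean u)
        - ⟪g (ubar i) - empObsMean ubar g, y⟫ • (ubar i - empMean ubar)‖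
      ≤ (‖(g (u i) - empObsMean u g) - (g (ubar i) - empObsMean ubar g)‖ * ‖u i - empMean u‖
          + ‖g (ubar i) - empObsMean ubar g‖
            * ‖(u i - empMean u) - (ubar i - empMean ubar)‖) * ‖y‖ := by
    intro i
    have hdecomp : ⟪g (u i) - empObsMean u g, y⟫ • (u i - empMean u)
          - ⟪g (ubar i) - empObsMean ubar g, y⟫ • (ubar i - empMean ubar)
        = ⟪(g (u i) - empObsMean u g) - (g (ubar i) - empObsMean ubar g), y⟫ • (u i - empMean u)
          + ⟪g (ubar i) - empObsMean ubar g, y⟫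
            • ((u i - empMean u) - (ubar i - empMean ubar)) := by
      simp only [inner_sub_left, sub_smul, smul_sub]; abel
    rw [hdecomp]
    calc ‖_ + _‖ ≤ ‖⟪(g (u i) - empObsMean u g) - (g (ubar i) - empObsMean ubar g), y⟫
            • (u i - empMean u)‖
          + ‖⟪g (ubar i) - empObsMean ubar g, y⟫
            • ((u i - empMean u) - (ubar i - empMean ubar))‖ := norm_add_le _ _
      _ ≤ ‖(g (u i) - empObsMean u g) - (g (ubar i) - empObsMean ubar g)‖ * ‖y‖
            * ‖u i - empMean u‖
          + ‖g (ubar i) - empObsMean ubar g‖ * ‖y‖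
            * ‖(u i - empMean u) - (ubar i - empMean ubar)‖ := by
          rw [norm_smul, norm_smul, Real.norm_eq_abs, Real.norm_eq_abs]
          gcongr <;> exact abs_real_inner_le_norm _ _
      _ = _ := by ring
  calc ‖(empCov u g - empCov ubar g) y‖
      = (N : ℝ)⁻¹ * ‖∑ i, (⟪g (u i) - empObsMean u g, y⟫ • (u i - empMean u)
          - ⟪g (ubar i) - empObsMean ubar g, y⟫ • (ubar i - empMean ubar))‖ := by
        rw [happ, norm_smul, Real.norm_eq_abs, abs_of_nonneg hNinv]
    _ ≤ (N : ℝ)⁻¹ * ∑ i, ‖⟪g (u i) - empObsMean u g, y⟫ • (u i - empMean u)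
          - ⟪g (ubar i) - empObsMean ubar g, y⟫ • (ubar i - empMean ubar)‖ :=
        mul_le_mul_of_nonneg_left (norm_sum_le _ _) hNinv
    _ ≤ (N : ℝ)⁻¹ * ∑ i,
          (‖(g (u i) - empObsMean u g) - (g (ubar i) - empObsMean ubar g)‖ * ‖u i - empMean u‖
            + ‖g (ubar i) - empObsMean ubar g‖
              * ‖(u i - empMean u) - (ubar i - empMean ubar)‖) * ‖y‖ :=
        mul_le_mul_of_nonneg_left (Finset.sum_le_sum fun i _ => hpt i) hNinv
    _ = (N : ℝ)⁻¹
          * (∑ i, ‖(g (u i) - empObsMean u g) - (g (ubar i) - empObsMean ubar g)‖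
              * ‖u i - empMean u‖
            + ∑ i, ‖g (ubar i) - empObsMean ubar g‖
              * ‖(u i - empMean u) - (ubar i - empMean ubar)‖) * ‖y‖ := by
        rw [← Finset.sum_mul, Finset.sum_add_distrib]; ring
    _ ≤ (N : ℝ)⁻¹ * (Real.sqrt ((L : ℝ) ^ 2 * S) * Real.sqrt P
          + Real.sqrt B * Real.sqrt S) * ‖y‖ := by
        have := add_le_add h1 h2
        exact mul_le_mul_of_nonneg_right (mul_le_mul_of_nonneg_left this hNinv) (norm_nonneg y)
    _ = ((L : ℝ) * Real.sqrt (empVar u) + Real.sqrt (empObsVar ubar g))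
        * Real.sqrt ((N : ℝ)⁻¹ * S) * ‖y‖ := by
        rw [Real.sqrt_mul (by positivity) S, Real.sqrt_sq L.coe_nonneg,
          Real.sqrt_mul hNinv S]
        have hu : Real.sqrt (empVar u) = Real.sqrt (N : ℝ)⁻¹ * Real.sqrt P := by
          rw [empVar, Real.sqrt_mul hNinv, hP]
        have hub : Real.sqrt (empObsVar ubar g) = Real.sqrt (N : ℝ)⁻¹ * Real.sqrt B := by
          rw [empObsVar, Real.sqrt_mul hNinv, hB]
        rw [hu, hub]
        have hNN : Real.sqrt (N : ℝ)⁻¹ * Real.sqrt (N : ℝ)⁻¹ = (N : ℝ)⁻¹ :=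
          Real.mul_self_sqrt hNinv
        linear_combination (-((L : ℝ) * Real.sqrt S * Real.sqrt P
          + Real.sqrt B * Real.sqrt S)) * ‖y‖ * hNN
end
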